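/- Let G be a simple undirected graph on vertices v_1, …, v_n with real adjacency matrix A_G, and for λ > 0 set R_λ = (1/λ)·I_n + A_G². Then A_G is nonsingular (invertible) if and only if for all i, j, lim_{λ→+∞} ⟨R_λ⁻¹ f_j, f_i⟩ = δ_{ij}, where f_i is the i-th column of A_G and δ_{ij} is the Kronecker delta; equivalently, if and only if R_λ⁻¹ A_G² converges entrywise to I_n as λ → +∞. -/

import Mathlib

/-!
Since `A` is symmetric, `⟨R_λ⁻¹ f_j, f_i⟩` is the `(i, j)` entry of `Aᵀ (λ⁻¹ I + A Aᵀ)⁻¹ A`.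
If `A` is invertible, then `λ⁻¹ I + A Aᵀ → A Aᵀ` is invertible, matrix inversion is continuous
there, and `Aᵀ (A Aᵀ)⁻¹ A = I`. Conversely, if `Aᵀ R_λ⁻¹ A → I`, its determinant is eventually
nonzero, and `det A` is a factor of it.
-/

open Filter Matrix Topology

namespace Matrix

theorem tendsto_iff_forall_tendsto_apply {m n R ι : Type*} [TopologicalSpace R] {l : Filter ι}
    {f : ι → Matrix m n R} {M : Matrix m n R} :
    Tendsto f l (𝓝 M) ↔ ∀ i j, Tendsto (fun x => f x i j) l (𝓝 (M i j)) :=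
  tendsto_pi_nhds.trans (forall_congr' fun _ => tendsto_pi_nhds)

theorem mulVec_dotProduct_transpose {m n R : Type*} [Fintype m] [Fintype n] [CommSemiring R]
    (M : Matrix m m R) (A : Matrix m n R) (i j : n) :
    (M *ᵥ Aᵀ j) ⬝ᵥ Aᵀ i = (Aᵀ * M * A) i j := by
  rw [dotProduct_comm, Matrix.mul_assoc, mul_apply']
  rfl

variable {m 𝕜 : Type*} [Fintype m] [DecidableEq m] [Field 𝕜]

theorem transpose_mul_inv_mul_transpose_mul {A : Matrix m m 𝕜} (hA : IsUnit A) :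
    Aᵀ * (A * Aᵀ)⁻¹ * A = 1 := by
  have hdet : IsUnit A.det := (isUnit_iff_isUnit_det A).mp hA
  rw [mul_inv_rev, ← Matrix.mul_assoc, mul_nonsing_inv _ (isUnit_det_transpose A hdet),
    Matrix.one_mul, nonsing_inv_mul _ hdet]

variable [TopologicalSpace 𝕜]

theorem continuousAt_inv_of_isUnit [IsTopologicalDivisionRing 𝕜] {M : Matrix m m 𝕜}
    (hM : IsUnit M) : ContinuousAt Inv.inv M := by
  refine continuousAt_matrix_inv M ?_
  rw [show (Ring.inverse : 𝕜 → 𝕜) = Inv.inv from funext Ring.inverse_eq_inv]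
  exact continuousAt_inv₀ ((isUnit_iff_isUnit_det M).mp hM).ne_zero

theorem tendsto_inv_smul_one_add [IsTopologicalDivisionRing 𝕜] {ι : Type*} {l : Filter ι}
    {ε : ι → 𝕜} (hε : Tendsto ε l (𝓝 0)) {M : Matrix m m 𝕜} (hM : IsUnit M) :
    Tendsto (fun x => (ε x • (1 : Matrix m m 𝕜) + M)⁻¹) l (𝓝 M⁻¹) := by
  refine (continuousAt_inv_of_isUnit hM).tendsto.comp ?_
  simpa only [zero_smul, zero_add] using (hε.smul_const (1 : Matrix m m 𝕜)).add_const M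

theorem tendsto_transpose_mul_inv_smul_one_add_mul_transpose_mul [IsTopologicalDivisionRing 𝕜]
    {ι : Type*} {l : Filter ι} {ε : ι → 𝕜} (hε : Tendsto ε l (𝓝 0)) {A : Matrix m m 𝕜}
    (hA : IsUnit A) :
    Tendsto (fun x => Aᵀ * (ε x • (1 : Matrix m m 𝕜) + A * Aᵀ)⁻¹ * A) l (𝓝 1) := by
  have hR := tendsto_inv_smul_one_add hε (hA.mul ((isUnit_transpose A).mpr hA))
  have hlim := (tendsto_const_nhds (x := Aᵀ)).mul hR |>.mul_const A
  rwa [transpose_mul_inv_mul_transpose_mul hA] at hlim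

theorem isUnit_of_tendsto_mul_one [IsTopologicalRing 𝕜] [T1Space 𝕜] {ι : Type*}
    {l : Filter ι} [l.NeBot] {P : ι → Matrix m m 𝕜} {A : Matrix m m 𝕜}
    (h : Tendsto (fun x => P x * A) l (𝓝 1)) : IsUnit A := by
  have hdet : Tendsto (fun x => (P x * A).det) l (𝓝 1) := by
    simpa only [Function.comp_def, id, det_one] using (continuous_id.matrix_det.tendsto _).comp h
  obtain ⟨x, hx⟩ := (hdet.eventually_ne one_ne_zero).exists
  rw [det_mul] at hx
  exact (isUnit_iff_isUnit_det A).mpr (right_ne_zero_of_mul hx).isUnit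

end Matrix

/-- `A_G` is nonsingular if and only if `lim_{λ→+∞} ⟨R_λ⁻¹ f_j, f_i⟩ = δ_{ij}` for all `i, j`,
where `f_i` is the `i`-th column of `A_G` and `R_λ = (1/λ)·I_n + A_G²`. -/
theorem isUnit_adjMatrix_iff_tendsto
    (n : ℕ) (G : SimpleGraph (Fin n)) [DecidableRel G.Adj] :
    let A : Matrix (Fin n) (Fin n) ℝ := G.adjMatrix ℝ
    IsUnit A ↔
      ∀ i j : Fin n,
        Tendsto (fun lam : ℝ =>
            ∑ k : Fin n,
              ((((1 / lam) • (1 : Matrix (Fin n) (Fin n) ℝ) + A ^ 2)⁻¹).mulVec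
                  (fun k => A k j)) k * A k i)
          atTop (nhds (if i = j then (1 : ℝ) else 0)) := by
  intro A
  have hsq : A ^ 2 = A * Aᵀ := by rw [G.transpose_adjMatrix, sq]
  have hentry : ∀ (lam : ℝ) (i j : Fin n),
      ∑ k, (((1 / lam) • (1 : Matrix (Fin n) (Fin n) ℝ) + A ^ 2)⁻¹ *ᵥ fun k => A k j) k * A k i =
        (Aᵀ * (lam⁻¹ • 1 + A * Aᵀ)⁻¹ * A) i j := by
    intro lam i j
    rw [one_div, hsq]
    exact mulVec_dotProduct_transpose _ A i j
  simp only [hentry, ← one_apply]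
  rw [← tendsto_iff_forall_tendsto_apply
    (f := fun lam : ℝ => Aᵀ * (lam⁻¹ • (1 : Matrix (Fin n) (Fin n) ℝ) + A * Aᵀ)⁻¹ * A)]
  exact ⟨tendsto_transpose_mul_inv_smul_one_add_mul_transpose_mul tendsto_inv_atTop_zero,
    isUnit_of_tendsto_mul_one⟩
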